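/- arXiv:2206.08261 — 12 statements merged into one kernel-verified Lean document; each statement's English description precedes it below -/
import Mathlib

section
/- Let N > 0, Q > 0, ū ≥ 0, V₁ > ū. Let f : [0,1] → (0,∞) be a continuous non-increasing probability density with F(θ) = ∫₀^θ f(t)dt and F(1) = 1. If Q < (2 + 1/f(1))·N/(V₁ − ū), then there exists θ* ∈ (0,1) satisfying the first-order condition f(θ*)·(V₁ − ū − (2N/Q)·F(θ*)·θ*) − (N/Q)·F(θ*)² = 0. -/
/-- Proposition 1 of the paper (general non-increasing density): when the
5G capacity satisfies `Q < (2 + 1/f(1))·N/(V₁ − ū)`, the first-order condition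
for the optimal cutoff has an interior solution `θ* ∈ (0,1)`. -/
theorem stmt_3 (N Q ubar V₁ : ℝ) (f F : ℝ → ℝ)
    (hN : 0 < N) (hQ : 0 < Q) (hubar : 0 ≤ ubar) (hV : ubar < V₁)
    (hfcont : ContinuousOn f (Set.Icc 0 1))
    (hfpos : ∀ θ ∈ Set.Icc (0 : ℝ) 1, 0 < f θ)
    (hfanti : AntitoneOn f (Set.Icc 0 1))
    (hF : ∀ θ, F θ = ∫ t in (0 : ℝ)..θ, f t)
    (hF1 : F 1 = 1)
    (hQsmall : Q < (2 + 1 / f 1) * N / (V₁ - ubar)) :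
    ∃ θ ∈ Set.Ioo (0 : ℝ) 1,
      f θ * (V₁ - ubar - (2 * N / Q) * F θ * θ) - (N / Q) * (F θ) ^ 2 = 0 := by
  set g : ℝ → ℝ := fun θ => f θ * (V₁ - ubar - (2 * N / Q) * F θ * θ) - (N / Q) * (F θ) ^ 2
    with hg
  have hfint : IntervalIntegrable f MeasureTheory.volume 0 1 := by
    apply ContinuousOn.intervalIntegrable
    rwa [Set.uIcc_of_le (by norm_num)]
  have hFcont : ContinuousOn F (Set.Icc 0 1) := by
    have := intervalIntegral.continuousOn_primitive_interval
      (μ := MeasureTheory.volume) (f := f) (a := 0) (b := 1) ?_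
    · rw [Set.uIcc_of_le (by norm_num : (0:ℝ) ≤ 1)] at this
      exact ContinuousOn.congr this (fun x _ => hF x)
    · rw [Set.uIcc_of_le (by norm_num : (0:ℝ) ≤ 1)]
      exact hfcont.integrableOn_compact isCompact_Icc
  have hgcont : ContinuousOn g (Set.Icc 0 1) := by
    apply ContinuousOn.sub
    · exact hfcont.mul (((continuousOn_const.sub ((continuousOn_const.mul hFcont).mul
        continuousOn_id)))); 
    · exact continuousOn_const.mul (hFcont.pow 2)
  have hF0 : F 0 = 0 := by rw [hF]; simp
  have hf1 : 0 < f 1 := hfpos 1 (by norm_num)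
  have hg0 : 0 < g 0 := by
    have hf0 : 0 < f 0 := hfpos 0 (by norm_num)
    simp only [hg, hF0]
    nlinarith
  have hg1 : g 1 < 0 := by
    have hVu : (0:ℝ) < V₁ - ubar := by linarith
    rw [lt_div_iff₀ hVu] at hQsmall
    have h1 : f 1 * Q * (V₁ - ubar) < 2 * N * f 1 + N := by
      have := mul_lt_mul_of_pos_left hQsmall hf1
      field_simp at this
      nlinarith
    simp only [hg, hF1]
    have e : f 1 * (V₁ - ubar - 2 * N / Q * 1 * 1) - N / Q * 1 ^ 2
        = (f 1 * Q * (V₁ - ubar) - 2 * N * f 1 - N) / Q := by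
      field_simp
    rw [e]
    exact div_neg_of_neg_of_pos (by linarith) hQ
  have h01 : (0:ℝ) ≤ 1 := by norm_num
  have := intermediate_value_Ioo' h01 hgcont
  have hmem : (0:ℝ) ∈ Set.Ioo (g 1) (g 0) := ⟨hg1, hg0⟩
  obtain ⟨θ, hθ, hgθ⟩ := this hmem
  exact ⟨θ, hθ, hgθ⟩
end

section
/- Let N > 0, Q > 0, ū ≥ 0, V₁ > ū, and define the 5G operator's profit under uniformly distributed congestion sensitivity by π̄₁(p) = N·p·min(1, √((V₁ − ū − p)Q/N)) for 0 ≤ p ≤ V₁ − ū and π̄₁(p) = 0 for p > V₁ − ū. If Q < 3N/(V₁ − ū), then for every p ≥ 0 one has π̄₁(p) ≤ π̄₁((2/3)(V₁ − ū)), and π̄₁((2/3)(V₁ − ū)) = (2/3)(V₁ − ū)·√((V₁ − ū)QN/3). -/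
/-!
Writing `a = V₁ − ū`, on `[0, a]` the profit is at most `N p √((a − p) Q / N) = √(N Q p² (a − p))`,
and `p² (a − p) ≤ 4a³/27` because the difference is `(p − 2a/3)² (p + a/3)`. At `p = 2a/3` the
small-capacity condition makes the square root at most `1`, so the minimum is attained by it
and the bound is an equality.
-/

theorem sq_mul_sub_le {a p : ℝ} (h : -a ≤ 3 * p) : p ^ 2 * (a - p) ≤ 4 * a ^ 3 / 27 := by
  nlinarith [mul_nonneg (sq_nonneg (p - 2 / 3 * a)) (show 0 ≤ p + a / 3 by linarith)]

theorem mul_mul_sqrt_div_eq {N p : ℝ} (hN : 0 < N) (hp : 0 ≤ p) (x : ℝ) :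
    N * p * √(x / N) = √(N * (p ^ 2 * x)) := by
  calc N * p * √(x / N) = √((N * p) ^ 2 * (x / N)) := by
        rw [Real.sqrt_mul (sq_nonneg _), Real.sqrt_sq (by positivity)]
    _ = √(N * (p ^ 2 * x)) := by
        congr 1
        field_simp

theorem sqrt_mul_four_mul_pow_three_div {a c : ℝ} (ha : 0 ≤ a) :
    √(c * (4 * a ^ 3 / 27)) = 2 / 3 * a * √(a * c / 3) := by
  rw [show c * (4 * a ^ 3 / 27) = (2 / 3 * a) ^ 2 * (a * c / 3) by ring,
    Real.sqrt_mul (sq_nonneg _), Real.sqrt_sq (by positivity)]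

theorem stmt_4_general (N Q ubar V₁ : ℝ) (π : ℝ → ℝ)
    (hN : 0 < N) (hQ : 0 < Q) (hV : ubar < V₁)
    (hπ₁ : ∀ p, 0 ≤ p → p ≤ V₁ - ubar →
      π p = N * p * min 1 (Real.sqrt ((V₁ - ubar - p) * Q / N)))
    (hπ₂ : ∀ p, V₁ - ubar < p → π p = 0)
    (hQsmall : Q < 3 * N / (V₁ - ubar)) :
    (∀ p, 0 ≤ p → π p ≤ π ((2 / 3) * (V₁ - ubar))) ∧
      π ((2 / 3) * (V₁ - ubar))
        = (2 / 3) * (V₁ - ubar) * Real.sqrt ((V₁ - ubar) * Q * N / 3) := by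
  set a := V₁ - ubar
  have ha : 0 < a := sub_pos.mpr hV
  have hsqrt_le_one : √((a - 2 / 3 * a) * Q / N) ≤ 1 := by
    refine Real.sqrt_le_one.mpr ((div_le_one hN).mpr ?_)
    linarith [(lt_div_iff₀ ha).mp hQsmall]
  have hmax : π (2 / 3 * a) = √(N * Q * (4 * a ^ 3 / 27)) := by
    rw [hπ₁ _ (by positivity) (by linarith), min_eq_right hsqrt_le_one,
      mul_mul_sqrt_div_eq hN (by positivity)]
    congr 1
    ring
  refine ⟨fun p hp => ?_, by rw [hmax, sqrt_mul_four_mul_pow_three_div ha.le]; ring_nf⟩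
  rw [hmax]
  rcases le_or_gt p a with hpa | hpa
  · calc π p ≤ N * p * √((a - p) * Q / N) := by
          rw [hπ₁ p hp hpa]
          exact mul_le_mul_of_nonneg_left (min_le_right _ _) (by positivity)
      _ = √(N * Q * (p ^ 2 * (a - p))) := by
          rw [mul_mul_sqrt_div_eq hN hp]
          congr 1
          ring
      _ ≤ √(N * Q * (4 * a ^ 3 / 27)) :=
          Real.sqrt_le_sqrt (mul_le_mul_of_nonneg_left (sq_mul_sub_le (by linarith)) (by positivity))
  · rw [hπ₂ p hpa]
    positivity

/-- Proposition 1 of the paper (uniform distribution, small-capacity regime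
`Q < 3N/(V₁ − ū)`): the benchmark 5G profit is maximized at price
`(2/3)(V₁ − ū)`, with optimal profit `(2/3)(V₁ − ū)·√((V₁ − ū)QN/3)`. -/
theorem stmt_4 (N Q ubar V₁ : ℝ) (π : ℝ → ℝ)
    (hN : 0 < N) (hQ : 0 < Q) (hubar : 0 ≤ ubar) (hV : ubar < V₁)
    (hπ₁ : ∀ p, 0 ≤ p → p ≤ V₁ - ubar →
      π p = N * p * min 1 (Real.sqrt ((V₁ - ubar - p) * Q / N)))
    (hπ₂ : ∀ p, V₁ - ubar < p → π p = 0)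
    (hQsmall : Q < 3 * N / (V₁ - ubar)) :
    (∀ p, 0 ≤ p → π p ≤ π ((2 / 3) * (V₁ - ubar))) ∧
      π ((2 / 3) * (V₁ - ubar))
        = (2 / 3) * (V₁ - ubar) * Real.sqrt ((V₁ - ubar) * Q * N / 3) :=
  stmt_4_general N Q ubar V₁ π hN hQ hV hπ₁ hπ₂ hQsmall
end

section
/- Let N > 0, Q > 0, ū ≥ 0, V₁ > ū, and define the 5G operator's profit under uniformly distributed congestion sensitivity by π̄₁(p) = N·p·min(1, √((V₁ − ū − p)Q/N)) for 0 ≤ p ≤ V₁ − ū and π̄₁(p) = 0 for p > V₁ − ū. If Q ≥ 3N/(V₁ − ū), then for every p ≥ 0 one has π̄₁(p) ≤ π̄₁(V₁ − ū − N/Q), and π̄₁(V₁ − ū − N/Q) = N·(V₁ − ū − N/Q). -/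
/-!
Write `V = V₁ - ū` and `a = N/Q`, so that the subscription fraction is `min 1 √((V - p)/a)`.
Below the kink `p = V - a` everybody subscribes and profit `N p` grows with `p`. Above it,
substitute `s = √((V - p)/a) ∈ [0, 1]`: profit becomes `N (V - a s²) s`, and
`V - a - (V - a s²) s = (1 - s)(V - a (1 + s + s²))` is nonnegative once `3a ≤ V`,
which is exactly the large-capacity condition.
-/

theorem sub_mul_sq_mul_le_sub {a V s : ℝ} (ha : 0 ≤ a) (haV : 3 * a ≤ V)
    (hs0 : 0 ≤ s) (hs1 : s ≤ 1) : (V - a * s ^ 2) * s ≤ V - a := by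
  have hfactor : V - a - (V - a * s ^ 2) * s = (1 - s) * (V - a * (1 + s + s ^ 2)) := by ring
  have hsum : a * (1 + s + s ^ 2) ≤ 3 * a := by
    nlinarith [mul_nonneg ha (sub_nonneg.2 hs1), mul_nonneg (mul_nonneg ha hs0) (sub_nonneg.2 hs1)]
  nlinarith [mul_nonneg (sub_nonneg.2 hs1) (sub_nonneg.2 (hsum.trans haV))]

theorem mul_min_one_sqrt_le {a V p : ℝ} (ha : 0 < a) (haV : 3 * a ≤ V)
    (hp0 : 0 ≤ p) (hpV : p ≤ V) : p * min 1 √((V - p) / a) ≤ V - a := by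
  set s := √((V - p) / a) with hs
  rcases le_or_gt s 1 with hs1 | hs1
  · have hp : p = V - a * s ^ 2 := by
      rw [hs, Real.sq_sqrt (div_nonneg (sub_nonneg.2 hpV) ha.le)]
      field_simp
      ring
    calc p * min 1 s ≤ p * s := mul_le_mul_of_nonneg_left (min_le_right _ _) hp0
      _ = (V - a * s ^ 2) * s := by rw [← hp]
      _ ≤ V - a := sub_mul_sq_mul_le_sub ha.le haV (Real.sqrt_nonneg _) hs1
  · have hpa : p < V - a := by
      rw [hs, Real.lt_sqrt zero_le_one, one_pow, one_lt_div ha] at hs1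
      linarith
    calc p * min 1 s ≤ p := mul_le_of_le_one_right hp0 (min_le_left _ _)
      _ ≤ V - a := hpa.le

theorem stmt_5_general (N Q ubar V₁ : ℝ) (π : ℝ → ℝ)
    (hN : 0 < N) (hQ : 0 < Q) (hV : ubar < V₁)
    (hπ₁ : ∀ p, 0 ≤ p → p ≤ V₁ - ubar →
      π p = N * p * min 1 (Real.sqrt ((V₁ - ubar - p) * Q / N)))
    (hπ₂ : ∀ p, V₁ - ubar < p → π p = 0)
    (hQlarge : 3 * N / (V₁ - ubar) ≤ Q) :
    (∀ p, 0 ≤ p → π p ≤ π (V₁ - ubar - N / Q)) ∧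
      π (V₁ - ubar - N / Q) = N * (V₁ - ubar - N / Q) := by
  have ha : 0 < N / Q := div_pos hN hQ
  have haV : 3 * (N / Q) ≤ V₁ - ubar := by
    rw [div_le_iff₀ (sub_pos.2 hV)] at hQlarge
    rw [← mul_div_assoc, div_le_iff₀ hQ]
    linarith
  have hratio (p : ℝ) : (V₁ - ubar - p) * Q / N = (V₁ - ubar - p) / (N / Q) :=
    (div_div_eq_mul_div _ _ _).symm
  have hopt : π (V₁ - ubar - N / Q) = N * (V₁ - ubar - N / Q) := by
    rw [hπ₁ _ (by linarith) (by linarith), hratio, sub_sub_cancel, div_self ha.ne',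
      Real.sqrt_one, min_self, mul_one]
  refine ⟨fun p hp => ?_, hopt⟩
  rw [hopt]
  rcases le_or_gt p (V₁ - ubar) with hpV | hpV
  · rw [hπ₁ p hp hpV, hratio, mul_assoc]
    exact mul_le_mul_of_nonneg_left (mul_min_one_sqrt_le ha haV hp hpV) hN.le
  · rw [hπ₂ p hpV]
    exact mul_nonneg hN.le (by linarith)

/-- Proposition 1 of the paper (uniform distribution, large-capacity regime
`Q ≥ 3N/(V₁ − ū)`): the benchmark 5G profit is maximized at price
`V₁ − ū − N/Q`, with optimal profit `N·(V₁ − ū − N/Q)`. -/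
theorem stmt_5 (N Q ubar V₁ : ℝ) (π : ℝ → ℝ)
    (hN : 0 < N) (hQ : 0 < Q) (hubar : 0 ≤ ubar) (hV : ubar < V₁)
    (hπ₁ : ∀ p, 0 ≤ p → p ≤ V₁ - ubar →
      π p = N * p * min 1 (Real.sqrt ((V₁ - ubar - p) * Q / N)))
    (hπ₂ : ∀ p, V₁ - ubar < p → π p = 0)
    (hQlarge : 3 * N / (V₁ - ubar) ≤ Q) :
    (∀ p, 0 ≤ p → π p ≤ π (V₁ - ubar - N / Q)) ∧
      π (V₁ - ubar - N / Q) = N * (V₁ - ubar - N / Q) :=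
  stmt_5_general N Q ubar V₁ π hN hQ hV hπ₁ hπ₂ hQlarge
end

section
/- Let N > 0, ū ≥ 0, V₁ > ū, and define M : (0,∞) → ℝ by M(Q) = (2/3)(V₁ − ū)·√((V₁ − ū)QN/3) if 0 < Q < 3N/(V₁ − ū), and M(Q) = N·(V₁ − ū − N/Q) if Q ≥ 3N/(V₁ − ū). Then M is continuous and strictly increasing on (0,∞). -/
/-! Write `a = V₁ - ū` and `Q* = 3N/a`. On `(0, Q*]` the profit is a positive multiple of
`√Q` and on `[Q*, ∞)` it is `N (a - N/Q)`; both branches are continuous and strictly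
increasing, and at `Q*` both equal `2aN/3`, so the two pieces glue into a continuous, strictly
increasing function on `(0, ∞)`. -/

open Set

section Gluing

variable {α β : Type*} [LinearOrder α] {f : α → β} {a c : α}

theorem ContinuousOn.Ioi_of_Ioc_of_Ici [TopologicalSpace α] [OrderClosedTopology α]
    [TopologicalSpace β] (hl : ContinuousOn f (Ioc a c)) (hr : ContinuousOn f (Ici c)) :
    ContinuousOn f (Ioi a) := by
  intro x (hax : a < x)
  refine ContinuousWithinAt.mono (t := Ioc a c ∪ Ici c) (.union ?_ ?_) Ioi_subset_Ioc_union_Ici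
  · by_cases hxl : x ∈ Ioc a c
    · exact hl x hxl
    · refine continuousWithinAt_of_notMem_closure fun hcl => hxl ⟨hax, ?_⟩
      exact (isClosed_Icc.closure_subset_iff.2 Ioc_subset_Icc_self hcl).2
  · by_cases hxr : x ∈ Ici c
    · exact hr x hxr
    · exact continuousWithinAt_of_notMem_closure (by rwa [closure_Ici])

theorem StrictMonoOn.Ioi_of_Ioc_of_Ici [Preorder β] (hac : a < c)
    (hl : StrictMonoOn f (Ioc a c)) (hr : StrictMonoOn f (Ici c)) : StrictMonoOn f (Ioi a) :=
  Ioc_union_Ici_eq_Ioi hac ▸ hl.union hr ⟨right_mem_Ioc.2 hac, fun _ hx => hx.2⟩ isLeast_Ici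

end Gluing

section Branches

variable {a N : ℝ}

noncomputable def lowCapacityProfit (a N Q : ℝ) : ℝ := (2 / 3) * a * Real.sqrt (a * Q * N / 3)

noncomputable def highCapacityProfit (a N Q : ℝ) : ℝ := N * (a - N / Q)

theorem continuous_lowCapacityProfit : Continuous (lowCapacityProfit a N) := by
  unfold lowCapacityProfit
  fun_prop

theorem strictMonoOn_lowCapacityProfit (ha : 0 < a) (hN : 0 < N) :
    StrictMonoOn (lowCapacityProfit a N) (Ici 0) := fun x hx y _ hxy =>
  mul_lt_mul_of_pos_left (Real.sqrt_lt_sqrt (by have := hx.out; positivity) (by gcongr))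
    (by positivity)

theorem continuousOn_highCapacityProfit : ContinuousOn (highCapacityProfit a N) (Ioi 0) :=
  continuousOn_const.mul (continuousOn_const.sub (continuousOn_const.div continuousOn_id
    fun _ hx => ne_of_gt hx))

theorem strictMonoOn_highCapacityProfit (hN : 0 < N) :
    StrictMonoOn (highCapacityProfit a N) (Ioi 0) := fun _ hx _ _ hxy =>
  mul_lt_mul_of_pos_left (sub_lt_sub_left (div_lt_div_of_pos_left hN hx hxy) a) hN

theorem lowCapacityProfit_eq_highCapacityProfit (ha : 0 < a) (hN : 0 < N) :
    lowCapacityProfit a N (3 * N / a) = highCapacityProfit a N (3 * N / a) := by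
  have hsqrt : a * (3 * N / a) * N / 3 = N ^ 2 := by field_simp
  rw [lowCapacityProfit, highCapacityProfit, hsqrt, Real.sqrt_sq hN.le]
  field_simp
  ring

end Branches

theorem stmt_6_general (N ubar V₁ : ℝ) (M : ℝ → ℝ)
    (hN : 0 < N) (hV : ubar < V₁)
    (hM₁ : ∀ Q, 0 < Q → Q < 3 * N / (V₁ - ubar) →
      M Q = (2 / 3) * (V₁ - ubar) * Real.sqrt ((V₁ - ubar) * Q * N / 3))
    (hM₂ : ∀ Q, 3 * N / (V₁ - ubar) ≤ Q → M Q = N * (V₁ - ubar - N / Q)) :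
    ContinuousOn M (Set.Ioi (0 : ℝ)) ∧ StrictMonoOn M (Set.Ioi (0 : ℝ)) := by
  have ha : 0 < V₁ - ubar := sub_pos.mpr hV
  generalize V₁ - ubar = a at ha hM₁ hM₂
  have hthreshold : 0 < 3 * N / a := by positivity
  have hhigh : EqOn M (highCapacityProfit a N) (Ici (3 * N / a)) := hM₂
  have hlow : EqOn M (lowCapacityProfit a N) (Ioc 0 (3 * N / a)) := by
    rintro Q ⟨hQ, hQle⟩
    rcases hQle.lt_or_eq with hlt | rfl
    · exact hM₁ Q hQ hlt
    · exact (hhigh (mem_Ici.2 le_rfl)).trans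
        (lowCapacityProfit_eq_highCapacityProfit ha hN).symm
  have hIoc : Ioc 0 (3 * N / a) ⊆ Ici 0 := Ioc_subset_Ioi_self.trans Ioi_subset_Ici_self
  have hIci : Ici (3 * N / a) ⊆ Ioi 0 := Ici_subset_Ioi.2 hthreshold
  constructor
  · exact .Ioi_of_Ioc_of_Ici (continuous_lowCapacityProfit.continuousOn.congr hlow)
      ((continuousOn_highCapacityProfit.mono hIci).congr hhigh)
  · exact .Ioi_of_Ioc_of_Ici hthreshold
      (((strictMonoOn_lowCapacityProfit ha hN).mono hIoc).congr hlow.symm)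
      (((strictMonoOn_highCapacityProfit hN).mono hIci).congr hhigh.symm)

/-- Proposition 1 of the paper: the benchmark 5G operator's maximal profit
`M(Q)` (equation (10)) is continuous and strictly increasing in the network
capacity `Q` on `(0, ∞)`. -/
theorem stmt_6 (N ubar V₁ : ℝ) (M : ℝ → ℝ)
    (hN : 0 < N) (hubar : 0 ≤ ubar) (hV : ubar < V₁)
    (hM₁ : ∀ Q, 0 < Q → Q < 3 * N / (V₁ - ubar) →
      M Q = (2 / 3) * (V₁ - ubar) * Real.sqrt ((V₁ - ubar) * Q * N / 3))
    (hM₂ : ∀ Q, 3 * N / (V₁ - ubar) ≤ Q → M Q = N * (V₁ - ubar - N / Q)) :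
    ContinuousOn M (Set.Ioi (0 : ℝ)) ∧ StrictMonoOn M (Set.Ioi (0 : ℝ)) :=
  stmt_6_general N ubar V₁ M hN hV hM₁ hM₂
end

section
/- Let N > 0, Q > 0, α ∈ (0,1), x₁, x₂ ∈ [0,1], p₁ ∈ ℝ, p₂ ≥ 0 and V₁ ≥ V₂. Define u₁(θ) = V₁ − (N/Q)(x₁ + x₂(1 − αx₂))θ − p₁ and u₂(θ) = (1 − αx₂)V₁ + αx₂V₂ − p₁ − p₂ − (1 − αx₂)(N/Q)(x₁ + x₂(1 − αx₂))θ. Then u₁(0) ≥ u₂(0), and the function θ ↦ u₁(θ) − u₂(θ) is non-increasing on [0,1]; consequently, for all 0 ≤ θ ≤ θ′ ≤ 1, u₁(θ′) ≥ u₂(θ′) implies u₁(θ) ≥ u₂(θ). -/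
/-- Lemma 2 of the paper (cutoff structure of user choices): the user with
`θ = 0` weakly prefers 5G only, the payoff difference `u₁ − u₂` is
non-increasing in `θ` on `[0,1]`, and hence if a user with sensitivity `θ′`
weakly prefers 5G only, so does every user with smaller sensitivity `θ ≤ θ′`. -/
theorem stmt_7 (N Q α x₁ x₂ p₁ p₂ V₁ V₂ : ℝ) (u₁ u₂ : ℝ → ℝ)
    (hN : 0 < N) (hQ : 0 < Q) (hα : α ∈ Set.Ioo (0 : ℝ) 1)
    (hx₁ : x₁ ∈ Set.Icc (0 : ℝ) 1) (hx₂ : x₂ ∈ Set.Icc (0 : ℝ) 1)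
    (hp₂ : 0 ≤ p₂) (hV : V₂ ≤ V₁)
    (hu₁ : ∀ θ, u₁ θ = V₁ - (N / Q) * (x₁ + x₂ * (1 - α * x₂)) * θ - p₁)
    (hu₂ : ∀ θ, u₂ θ = (1 - α * x₂) * V₁ + α * x₂ * V₂ - p₁ - p₂
      - (1 - α * x₂) * (N / Q) * (x₁ + x₂ * (1 - α * x₂)) * θ) :
    u₂ 0 ≤ u₁ 0 ∧ AntitoneOn (fun θ => u₁ θ - u₂ θ) (Set.Icc 0 1) ∧
      ∀ θ θ' : ℝ, 0 ≤ θ → θ ≤ θ' → θ' ≤ 1 → u₂ θ' ≤ u₁ θ' → u₂ θ ≤ u₁ θ := by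
  obtain ⟨hα0, hα1⟩ := hα
  obtain ⟨hx20, hx21⟩ := hx₂
  obtain ⟨hx10, hx11⟩ := hx₁
  have hax : 0 ≤ α * x₂ := mul_nonneg hα0.le hx20
  have hax1 : α * x₂ ≤ 1 := by nlinarith
  have hC : 0 ≤ x₁ + x₂ * (1 - α * x₂) := by nlinarith
  have hNQ : 0 ≤ N / Q := le_of_lt (div_pos hN hQ)
  have hdiff : ∀ θ, u₁ θ - u₂ θ =
      α * x₂ * (V₁ - V₂) + p₂ - α * x₂ * ((N / Q) * (x₁ + x₂ * (1 - α * x₂))) * θ := by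
    intro θ; rw [hu₁, hu₂]; ring
  have hslope : 0 ≤ α * x₂ * ((N / Q) * (x₁ + x₂ * (1 - α * x₂))) :=
    mul_nonneg hax (mul_nonneg hNQ hC)
  have hanti : AntitoneOn (fun θ => u₁ θ - u₂ θ) (Set.Icc 0 1) := by
    intro a _ b _ hab
    simp only [hdiff]
    nlinarith
  refine ⟨?_, hanti, ?_⟩
  · have := hdiff 0
    nlinarith [mul_nonneg hax (sub_nonneg.2 hV)]
  · intro θ θ' h0 hle h1 h
    have := hanti ⟨h0, hle.trans h1⟩ ⟨h0.trans hle, h1⟩ hle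
    simp only at this
    linarith
end

section
/- For every α ∈ (0,1), the cubic equation 4αx³ − 3αx² − 2x + 1 = 0 has a unique solution x̂ in [0,1]; moreover x̂ ∈ (0,1), 4αx³ − 3αx² − 2x + 1 > 0 for all x ∈ [0, x̂), and 4αx³ − 3αx² − 2x + 1 < 0 for all x ∈ (x̂, 1]. -/
private lemma cubic_uniq (α x y : ℝ) (hα0 : 0 < α) (hα1 : α < 1)
    (hx0 : 0 ≤ x) (hy1 : y ≤ 1) (hlt : x < y)
    (hx : 4 * α * x ^ 3 - 3 * α * x ^ 2 - 2 * x + 1 = 0)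
    (hy : 4 * α * y ^ 3 - 3 * α * y ^ 2 - 2 * y + 1 = 0) : False := by
  have hxy : x - y ≠ 0 := sub_ne_zero_of_ne (ne_of_lt hlt)
  have hE : 4*α*(x^2+x*y+y^2) - 3*α*(x+y) - 2 = 0 := by
    have h : (x - y) * (4*α*(x^2+x*y+y^2) - 3*α*(x+y) - 2) = 0 := by
      linear_combination hx - hy
    rcases mul_eq_zero.mp h with h' | h'
    · exact absurd h' hxy
    · exact h'
  set r : ℝ := 3/4 - x - y with hr
  have hx' : 0 < x := by
    rcases eq_or_lt_of_le hx0 with h | h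
    · exfalso; rw [← h] at hx; nlinarith
    · exact h
  have hy' : y < 1 := by
    rcases eq_or_lt_of_le hy1 with h | h
    · exfalso; rw [h] at hy; nlinarith
    · exact h
  have hx1 : x < 1 := lt_trans hlt hy'
  have hy0 : 0 < y := lt_trans hx' hlt
  have I1 : 4*α*(1-x)*(1-y)*(1-r) = α - 1 := by
    rw [hr]; linear_combination -hx - (1-x)*hE
  have I0 : -(4*α*x*y*r) = 1 := by
    rw [hr]; linear_combination x*hE - hx
  have hr1 : 1 < r := by
    by_contra hcon
    push_neg at hcon
    have h4 : 0 < 4 * α * (1 - x) * (1 - y) :=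
      mul_pos (mul_pos (by linarith) (by linarith)) (by linarith)
    nlinarith [mul_nonneg (le_of_lt h4) (by linarith : (0:ℝ) ≤ 1 - r)]
  have hfin : 0 < 4 * α * x * y * r :=
    mul_pos (mul_pos (mul_pos (by linarith) hx') hy0) (by linarith)
  linarith [I0]

/-- Proposition 3 / Appendix E of the paper: for every `α ∈ (0,1)`, the cubic
`4αx³ − 3αx² − 2x + 1 = 0` has a unique root `xhat` in `[0,1]`; moreover
`xhat ∈ (0,1)`, the cubic is positive on `[0, xhat)` and negative on `(xhat, 1]`. -/
theorem stmt_9 (α : ℝ) (hα : α ∈ Set.Ioo (0 : ℝ) 1) :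
    ∃ xhat : ℝ, xhat ∈ Set.Ioo (0 : ℝ) 1 ∧
      4 * α * xhat ^ 3 - 3 * α * xhat ^ 2 - 2 * xhat + 1 = 0 ∧
      (∀ x ∈ Set.Icc (0 : ℝ) 1,
        4 * α * x ^ 3 - 3 * α * x ^ 2 - 2 * x + 1 = 0 → x = xhat) ∧
      (∀ x ∈ Set.Ico (0 : ℝ) xhat,
        0 < 4 * α * x ^ 3 - 3 * α * x ^ 2 - 2 * x + 1) ∧
      (∀ x ∈ Set.Ioc xhat (1 : ℝ),
        4 * α * x ^ 3 - 3 * α * x ^ 2 - 2 * x + 1 < 0) := by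
  obtain ⟨hα0, hα1⟩ := hα
  set f : ℝ → ℝ := fun x => 4 * α * x ^ 3 - 3 * α * x ^ 2 - 2 * x + 1 with hf
  have hcont : Continuous f := by fun_prop
  have hf0 : f 0 = 1 := by simp [hf]
  have hf1 : f 1 = α - 1 := by simp [hf]; ring
  -- existence of root via IVT
  have hsub : Set.Icc (f 1) (f 0) ⊆ f '' Set.Icc 0 1 :=
    intermediate_value_Icc' (by norm_num) hcont.continuousOn
  have h0mem : (0:ℝ) ∈ Set.Icc (f 1) (f 0) := by
    rw [hf0, hf1]; constructor <;> linarith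
  obtain ⟨xhat, hxmem, hxroot⟩ := hsub h0mem
  obtain ⟨hx0, hx1⟩ := hxmem
  have hroot : 4 * α * xhat ^ 3 - 3 * α * xhat ^ 2 - 2 * xhat + 1 = 0 := hxroot
  have hne0 : xhat ≠ 0 := by
    intro h; rw [h] at hroot; norm_num at hroot
  have hne1 : xhat ≠ 1 := by
    intro h; rw [h] at hroot; nlinarith
  have hx0' : 0 < xhat := lt_of_le_of_ne hx0 (Ne.symm hne0)
  have hx1' : xhat < 1 := lt_of_le_of_ne hx1 hne1
  have huniq : ∀ x ∈ Set.Icc (0:ℝ) 1,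
      4 * α * x ^ 3 - 3 * α * x ^ 2 - 2 * x + 1 = 0 → x = xhat := by
    rintro x ⟨h0, h1⟩ hx
    rcases lt_trichotomy x xhat with h | h | h
    · exact absurd (cubic_uniq α x xhat hα0 hα1 h0 hx1 h hx hroot) not_false
    · exact h
    · exact absurd (cubic_uniq α xhat x hα0 hα1 hx0 h1 h hroot hx) not_false
  refine ⟨xhat, ⟨hx0', hx1'⟩, hroot, huniq, ?_, ?_⟩
  · rintro x ⟨h0, hxx⟩
    by_contra h
    push_neg at h
    rcases eq_or_lt_of_le h with heq | hlt
    · have := huniq x ⟨h0, le_of_lt (lt_trans hxx hx1')⟩ heq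
      linarith [this ▸ hxx]
    · -- f x < 0, f 0 = 1 > 0, root in [0, x]
      have hsub2 : Set.Icc (f x) (f 0) ⊆ f '' Set.Icc 0 x :=
        intermediate_value_Icc' h0 hcont.continuousOn
      have : (0:ℝ) ∈ Set.Icc (f x) (f 0) := by
        rw [hf0]; exact ⟨le_of_lt hlt, by norm_num⟩
      obtain ⟨z, ⟨hz0, hzx⟩, hz⟩ := hsub2 this
      have := huniq z ⟨hz0, le_trans hzx (le_of_lt (lt_trans hxx hx1'))⟩ hz
      rw [this] at hzx
      linarith
  · rintro x ⟨hxx, h1⟩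
    by_contra h
    push_neg at h
    rcases eq_or_lt_of_le h with heq | hlt
    · have := huniq x ⟨le_of_lt (lt_trans hx0' hxx), h1⟩ heq.symm
      linarith [this ▸ hxx]
    · have hsub2 : Set.Icc (f 1) (f x) ⊆ f '' Set.Icc x 1 :=
        intermediate_value_Icc' h1 hcont.continuousOn
      have : (0:ℝ) ∈ Set.Icc (f 1) (f x) := by
        rw [hf1]; exact ⟨by linarith, le_of_lt hlt⟩
      obtain ⟨z, ⟨hzx, hz1⟩, hz⟩ := hsub2 this
      have := huniq z ⟨le_trans (le_of_lt (lt_trans hx0' hxx)) hzx, hz1⟩ hz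
      rw [this] at hzx
      linarith
end

section
/- Let N > 0, Q > 0, ū ≥ 0, V₁ > ū, α ∈ (0,1). If Q < N/(V₁ − ū) and α < 1 − √((V₁ − ū)Q/N), then for every x₂ ∈ [0,1] and every p₁ ≥ 0, p₂ ≥ 0, one has V₁ − (1 − αx₂)·(N/Q)·(1 − αx₂²) − p₁ − p₂ < ū. In particular, under full participation x₁ = 1 − x₂ the user with sensitivity θ = 1 would get 5G+WiFi payoff strictly below the reservation payoff, so full market participation is impossible. -/
/-! With `s = (V₁ − ū)Q/N`, the coverage condition reads `√s < 1 − α`, i.e. `V₁ − ū < (1 − α)² N/Q`.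
On the other hand both factors `1 − αx₂` and `1 − αx₂²` of the congestion cost are at least `1 − α`,
so the cost already exceeds `V₁ − ū` before any price is charged. -/

open Set

lemma lt_sq_mul_div_of_sqrt_mul_div_lt {d N Q c : ℝ} (hN : 0 < N) (hQ : 0 < Q)
    (h : Real.sqrt (d * Q / N) < c) : d < c ^ 2 * (N / Q) := by
  have hs : d * Q / N < c ^ 2 := Real.lt_sq_of_sqrt_lt h
  rw [mul_div_assoc', lt_div_iff₀ hQ]
  rwa [div_lt_iff₀ hN] at hs

lemma one_sub_le_one_sub_mul_pow {α x : ℝ} (hα : 0 ≤ α) (hx : x ∈ Icc (0 : ℝ) 1) (n : ℕ) :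
    1 - α ≤ 1 - α * x ^ n := by
  have : α * x ^ n ≤ α := mul_le_of_le_one_right hα (pow_le_one₀ hx.1 hx.2)
  linarith

lemma sq_one_sub_le_mul_one_sub {α x : ℝ} (hα₀ : 0 ≤ α) (hα₁ : α ≤ 1) (hx : x ∈ Icc (0 : ℝ) 1) :
    (1 - α) ^ 2 ≤ (1 - α * x) * (1 - α * x ^ 2) := by
  have h₁ := one_sub_le_one_sub_mul_pow hα₀ hx 1
  rw [pow_one] at h₁
  rw [sq]
  exact mul_le_mul h₁ (one_sub_le_one_sub_mul_pow hα₀ hx 2) (by linarith) (by linarith)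

theorem stmt_11_general (N Q ubar V₁ α : ℝ)
    (hN : 0 < N) (hQ : 0 < Q)
    (hα₀ : 0 < α)
    (hαsmall : α < 1 - Real.sqrt ((V₁ - ubar) * Q / N)) :
    ∀ x₂ ∈ Set.Icc (0 : ℝ) 1, ∀ p₁ p₂ : ℝ, 0 ≤ p₁ → 0 ≤ p₂ →
      V₁ - (1 - α * x₂) * (N / Q) * (1 - α * x₂ ^ 2) - p₁ - p₂ < ubar := by
  intro x₂ hx p₁ p₂ hp₁ hp₂
  have hsqrt : Real.sqrt ((V₁ - ubar) * Q / N) < 1 - α := by linarith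
  have hα₁ : α ≤ 1 := by linarith [Real.sqrt_nonneg ((V₁ - ubar) * Q / N)]
  have hcost : V₁ - ubar < (1 - α * x₂) * (N / Q) * (1 - α * x₂ ^ 2) :=
    calc V₁ - ubar < (1 - α) ^ 2 * (N / Q) := lt_sq_mul_div_of_sqrt_mul_div_lt hN hQ hsqrt
      _ ≤ (1 - α * x₂) * (1 - α * x₂ ^ 2) * (N / Q) := by
        gcongr; exact sq_one_sub_le_mul_one_sub hα₀.le hα₁ hx
      _ = (1 - α * x₂) * (N / Q) * (1 - α * x₂ ^ 2) := by ring
  linarith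

/-- Proposition 3 of the paper (small capacity and small per-AP coverage):
if `Q < N/(V₁ − ū)` and `α < 1 − √((V₁ − ū)Q/N)`, then under full participation
the boundary user `θ = 1` would get 5G+WiFi payoff strictly below `ū`, for any
`x₂ ∈ [0,1]` and any nonnegative prices; so full participation is impossible. -/
theorem stmt_11 (N Q ubar V₁ α : ℝ)
    (hN : 0 < N) (hQ : 0 < Q) (hubar : 0 ≤ ubar) (hV : ubar < V₁)
    (hα₀ : 0 < α) (hα₁ : α < 1)
    (hQsmall : Q < N / (V₁ - ubar))
    (hαsmall : α < 1 - Real.sqrt ((V₁ - ubar) * Q / N)) :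
    ∀ x₂ ∈ Set.Icc (0 : ℝ) 1, ∀ p₁ p₂ : ℝ, 0 ≤ p₁ → 0 ≤ p₂ →
      V₁ - (1 - α * x₂) * (N / Q) * (1 - α * x₂ ^ 2) - p₁ - p₂ < ubar :=
  stmt_11_general N Q ubar V₁ α hN hQ hα₀ hαsmall
end

section
/- Let K > 0 and s ∈ (0,1]. Define, for α ∈ (0, 1/(3s)], g₁(α) = ((1 − √(1 − 3αs))/3) · K · s · ( s − ((1 − √(1 − 3αs))/(3α)) · (1 − (1 − √(1 − 3αs))/3) ). Then g₁ is monotone non-decreasing on (0, 1/(3s)]. -/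
private lemma gsimp_aux (K s α : ℝ) (hs : 0 < s) (hα : 0 < α) (h1 : 3 * α * s ≤ 1) :
    ((1 - Real.sqrt (1 - 3 * α * s)) / 3) * K * s *
      (s - ((1 - Real.sqrt (1 - 3 * α * s)) / (3 * α)) *
        (1 - (1 - Real.sqrt (1 - 3 * α * s)) / 3))
    = K * s ^ 2 / 9 * ((1 - Real.sqrt (1 - 3 * α * s)) *
        (3 - 2 * (1 - Real.sqrt (1 - 3 * α * s))) / (2 - (1 - Real.sqrt (1 - 3 * α * s)))) := by
  set r := Real.sqrt (1 - 3 * α * s) with hr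
  have hr0 : 0 ≤ r := Real.sqrt_nonneg _
  have hr2 : r ^ 2 = 1 - 3 * α * s := Real.sq_sqrt (by linarith)
  have hr1 : r < 1 := by nlinarith [mul_pos hα hs]
  have h1r : (0:ℝ) < 1 + r := by linarith
  have h3 : (1 - r) / (3 * α) = s / (1 + r) := by
    rw [div_eq_div_iff (by linarith) h1r.ne']
    nlinarith [hr2]
  rw [h3]
  have h2 : 2 - (1 - r) = 1 + r := by ring
  rw [h2]
  field_simp
  ring

private lemma phi_mono (a b : ℝ) (ha0 : 0 < a) (hab : a ≤ b) (hb1 : b ≤ 1) :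
    a * (3 - 2 * a) / (2 - a) ≤ b * (3 - 2 * b) / (2 - b) := by
  have ha1 : a ≤ 1 := hab.trans hb1
  rw [div_le_div_iff₀ (by linarith) (by linarith)]
  nlinarith [mul_nonneg (sub_nonneg.2 hab) (mul_nonneg (by linarith : (0:ℝ) ≤ 1 - a) (by linarith : (0:ℝ) ≤ 1 - b)),
    mul_nonneg (sub_nonneg.2 hab) (by linarith : (0:ℝ) ≤ 1 - a),
    mul_nonneg (sub_nonneg.2 hab) (by linarith : (0:ℝ) ≤ 1 - b)]

/-- Corollary 1 of the paper (Appendix A): the WiFi deployment-cost threshold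
`g₁(α)` for positive WiFi subscription is monotone non-decreasing in the
per-AP WiFi coverage addition `α` on `(0, 1/(3s)]`. -/
theorem stmt_13 (K s : ℝ) (g₁ : ℝ → ℝ)
    (hK : 0 < K) (hs₀ : 0 < s) (hs₁ : s ≤ 1)
    (hg : ∀ α : ℝ, g₁ α = ((1 - Real.sqrt (1 - 3 * α * s)) / 3) * K * s *
      (s - ((1 - Real.sqrt (1 - 3 * α * s)) / (3 * α)) *
        (1 - (1 - Real.sqrt (1 - 3 * α * s)) / 3))) :
    MonotoneOn g₁ (Set.Ioc (0 : ℝ) (1 / (3 * s))) := by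
  intro α hα β hβ hαβ
  obtain ⟨hα0, hα1⟩ := hα
  obtain ⟨hβ0, hβ1⟩ := hβ
  have h3s : (0:ℝ) < 3 * s := by linarith
  have hαs : 3 * α * s ≤ 1 := by
    have h := mul_le_mul_of_nonneg_right hα1 h3s.le
    rw [one_div_mul_cancel h3s.ne'] at h
    nlinarith
  have hβs : 3 * β * s ≤ 1 := by
    have h := mul_le_mul_of_nonneg_right hβ1 h3s.le
    rw [one_div_mul_cancel h3s.ne'] at h
    nlinarith
  rw [hg α, hg β, gsimp_aux K s α hs₀ hα0 hαs, gsimp_aux K s β hs₀ hβ0 hβs]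
  set ra := Real.sqrt (1 - 3 * α * s) with hra
  set rb := Real.sqrt (1 - 3 * β * s) with hrb
  have hra0 : 0 ≤ ra := Real.sqrt_nonneg _
  have hra2 : ra ^ 2 = 1 - 3 * α * s := Real.sq_sqrt (by linarith)
  have hra1 : ra < 1 := by nlinarith [mul_pos hα0 hs₀]
  have hrb0 : 0 ≤ rb := Real.sqrt_nonneg _
  have hle : rb ≤ ra := Real.sqrt_le_sqrt (by nlinarith)
  have hC : (0:ℝ) ≤ K * s ^ 2 / 9 := by positivity
  exact mul_le_mul_of_nonneg_left
    (phi_mono (1 - ra) (1 - rb) (by linarith) (by linarith) (by linarith)) hC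
end

section
/- Let N > 0, Q > 0, α ∈ (0,1), x₁ ∈ [0,1], x₂ ∈ (0,1], x̄₁ ≥ 0, and V₁, p₁, ū ∈ ℝ. Suppose (i) p₂ = α·x₂·(N/Q)·(x₁ + x₂(1 − αx₂))·x₁, (ii) V₁ − (N/Q)·(1 − αx₂)·(x₁ + x₂(1 − αx₂))·(x₁ + x₂) − p₁ − p₂ = ū, and (iii) V₁ − (N/Q)·x̄₁² − p₁ = ū. Then x₁ + x₂(1 − αx₂) = x̄₁, and consequently x₁ + x₂ > x̄₁. -/
/-- Key algebraic step in the proof of Proposition 4 (Appendix B): combining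
the cutoff indifference condition, the boundary participation condition and the
benchmark cutoff condition yields `x₁ + x₂(1 − αx₂) = x̄₁`, hence
`x₁ + x₂ > x̄₁`: the 5G operator serves strictly more subscribers at the same
price after the introduction of the crowdsourced WiFi. -/
theorem stmt_14 (N Q α x₁ x₂ xbar₁ V₁ p₁ p₂ ubar : ℝ)
    (hN : 0 < N) (hQ : 0 < Q) (hα : α ∈ Set.Ioo (0 : ℝ) 1)
    (hx₁ : x₁ ∈ Set.Icc (0 : ℝ) 1) (hx₂ : x₂ ∈ Set.Ioc (0 : ℝ) 1)
    (hxbar : 0 ≤ xbar₁)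
    (h₁ : p₂ = α * x₂ * (N / Q) * (x₁ + x₂ * (1 - α * x₂)) * x₁)
    (h₂ : V₁ - (N / Q) * (1 - α * x₂) * (x₁ + x₂ * (1 - α * x₂)) * (x₁ + x₂)
      - p₁ - p₂ = ubar)
    (h₃ : V₁ - (N / Q) * xbar₁ ^ 2 - p₁ = ubar) :
    x₁ + x₂ * (1 - α * x₂) = xbar₁ ∧ xbar₁ < x₁ + x₂ := by
  obtain ⟨hα0, hα1⟩ := hα
  obtain ⟨hx₁0, hx₁1⟩ := hx₁
  obtain ⟨hx₂0, hx₂1⟩ := hx₂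
  have hNQ : 0 < N / Q := div_pos hN hQ
  have hαx₂ : α * x₂ < 1 := by nlinarith
  have hA0 : 0 ≤ x₁ + x₂ * (1 - α * x₂) := by nlinarith
  have hsq : (N / Q) * (x₁ + x₂ * (1 - α * x₂)) ^ 2 = (N / Q) * xbar₁ ^ 2 := by
    have := h₂.trans h₃.symm
    nlinarith [this]
  have hsq' : (x₁ + x₂ * (1 - α * x₂)) ^ 2 = xbar₁ ^ 2 :=
    mul_left_cancel₀ (ne_of_gt hNQ) hsq
  have hA : x₁ + x₂ * (1 - α * x₂) = xbar₁ := by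
    nlinarith [sq_nonneg (x₁ + x₂ * (1 - α * x₂) - xbar₁),
      sq_nonneg (x₁ + x₂ * (1 - α * x₂) + xbar₁)]
  refine ⟨hA, ?_⟩
  nlinarith [mul_pos hα0 (mul_pos hx₂0 hx₂0)]
end

section
/- Let N > 0, Q > 0, ū ∈ ℝ, α ∈ (0,1) and x₂ ∈ (0,1]. Define ū₁*(θ) = (N/Q)(1 − θ) + ū, u₁*(θ) = (N/Q)(1 − αx₂²)(1 − αx₂² − θ) + ū, and u₂*(θ) = (N/Q)(1 − αx₂²)(1 − αx₂)(1 − θ) + ū. Then for every θ ∈ [0,1): max(u₁*(θ), u₂*(θ)) < ū₁*(θ). -/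
/-- Proposition 7 of the paper (Appendix D): with non-small 5G capacity and
full participation after the introduction of the crowdsourced WiFi, every user
with sensitivity `θ ∈ [0,1)` gets a strictly smaller equilibrium payoff:
`max(u₁*(θ), u₂*(θ)) < ū₁*(θ)`. -/
theorem stmt_15 (N Q ubar α x₂ : ℝ) (ubar₁ u₁ u₂ : ℝ → ℝ)
    (hN : 0 < N) (hQ : 0 < Q) (hα : α ∈ Set.Ioo (0 : ℝ) 1)
    (hx₂ : x₂ ∈ Set.Ioc (0 : ℝ) 1)
    (hubar₁ : ∀ θ, ubar₁ θ = (N / Q) * (1 - θ) + ubar)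
    (hu₁ : ∀ θ, u₁ θ = (N / Q) * (1 - α * x₂ ^ 2) * (1 - α * x₂ ^ 2 - θ) + ubar)
    (hu₂ : ∀ θ, u₂ θ = (N / Q) * (1 - α * x₂ ^ 2) * (1 - α * x₂) * (1 - θ) + ubar) :
    ∀ θ ∈ Set.Ico (0 : ℝ) 1, max (u₁ θ) (u₂ θ) < ubar₁ θ := by
  rintro θ ⟨hθ0, hθ1⟩
  obtain ⟨hα0, hα1⟩ := hα
  obtain ⟨hx0, hx1⟩ := hx₂
  have hc : 0 < N / Q := div_pos hN hQ
  have ha : 0 < α * x₂ ^ 2 := by positivity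
  have hx2sq : x₂ ^ 2 ≤ 1 := by nlinarith
  have ha1 : α * x₂ ^ 2 < 1 := by nlinarith
  have hax : α * x₂ < 1 := by nlinarith
  rw [hubar₁, hu₁, hu₂, max_lt_iff]
  constructor
  · have : (1 - α * x₂ ^ 2) * (1 - α * x₂ ^ 2 - θ) < 1 - θ := by nlinarith
    nlinarith
  · have : (1 - α * x₂ ^ 2) * (1 - α * x₂) * (1 - θ) < 1 - θ := by nlinarith [mul_pos (mul_pos ha (mul_pos hα0 hx0)) (by linarith : (0:ℝ) < 1 - θ)]
    nlinarith
end

section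
/- Let N > 0, Q > 0, ū ≥ 0, V₁ > ū with Q < N/(V₁ − ū), and let α satisfy 0 < α < 1 − √((V₁ − ū)Q/N). For p ∈ [0, V₁ − ū], define l(p) = N·p·( √((V₁ − ū − p)Q/N) + (1 − √(1 − 3α√((V₁ − ū − p)Q/N)))² / (9α) ). Then the expressions under all square roots are nonnegative on [0, V₁ − ū], and there exists p′ with 0 ≤ p′ < (2/3)(V₁ − ū) such that l(p′) > l((2/3)(V₁ − ū)). -/
/-!
Write `v = V₁ − ū` and `s(p) = √((v − p)Q/N)`, so that `l(p) = N p h(s(p))` with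
`h(s) = s + (1 − √(1 − 3αs))² / (9α)`. Since `(2/3)v` maximises the benchmark profit `N p s(p)`,
the derivative of `l` there is `N (h(s₀) − s₀ h'(s₀))`, and with `r = √(1 − 3αs₀) ∈ (0, 1)` this equals
`−N (1 − r)² / (9αr) < 0`. Hence `l` is larger slightly to the left of `(2/3)v`.
-/

open Set

theorem HasDerivAt.exists_mem_Ioo_lt_of_neg {f : ℝ → ℝ} {f' a x : ℝ} (hf : HasDerivAt f f' x)
    (hf' : f' < 0) (ha : a < x) : ∃ y ∈ Ioo a x, f x < f y := by
  have hslope : ∀ᶠ y in nhdsWithin x (Iio x), slope f x y < 0 :=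
    (hasDerivAt_iff_tendsto_slope_left_right.mp hf).1 (Iio_mem_nhds hf')
  obtain ⟨y, hy, hyIoo⟩ := (hslope.and (Ioo_mem_nhdsLT ha)).exists
  refine ⟨y, hyIoo, ?_⟩
  rw [slope_def_field, div_neg_iff] at hy
  rcases hy with ⟨hfy, -⟩ | ⟨-, hxy⟩
  · linarith
  · linarith [hyIoo.2]

lemma three_mul_mul_le_of_le_one_sub {α t : ℝ} (ht : 0 ≤ t) (hαt : α ≤ 1 - t) :
    3 * α * t ≤ 3 / 4 := by
  nlinarith [sq_nonneg (t - 1 / 2), mul_le_mul_of_nonneg_right hαt ht]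

noncomputable def shareWithWifi (α s : ℝ) : ℝ :=
  s + (1 - Real.sqrt (1 - 3 * α * s)) ^ 2 / (9 * α)

lemma hasDerivAt_shareWithWifi {α s : ℝ} (hs : 3 * α * s < 1) :
    HasDerivAt (shareWithWifi α)
      (1 + (1 - Real.sqrt (1 - 3 * α * s)) / (3 * Real.sqrt (1 - 3 * α * s))) s := by
  have hr : HasDerivAt (fun s => Real.sqrt (1 - 3 * α * s))
      (-(3 * α) / (2 * Real.sqrt (1 - 3 * α * s))) s :=
    (((hasDerivAt_id s).const_mul (3 * α)).const_sub 1 |>.congr_deriv (by ring)).sqrt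
      (by simp only [id]; linarith)
  have h := (hasDerivAt_id s).add ((((hr.const_sub 1).pow 2)).div_const (9 * α))
  refine h.congr_deriv ?_
  by_cases hα : α = 0
  · simp [hα]
  have hr0 : Real.sqrt (1 - 3 * α * s) ≠ 0 := (Real.sqrt_pos.mpr (by linarith)).ne'
  field_simp
  ring

lemma shareWithWifi_sub_mul_deriv_neg {α s : ℝ} (hα : 0 < α) (hs₀ : 0 < s)
    (hs : 3 * α * s < 1) :
    shareWithWifi α s
      - s * (1 + (1 - Real.sqrt (1 - 3 * α * s)) / (3 * Real.sqrt (1 - 3 * α * s))) < 0 := by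
  set r := Real.sqrt (1 - 3 * α * s) with hr
  have hr0 : 0 < r := Real.sqrt_pos.mpr (by linarith)
  have hr2 : r ^ 2 = 1 - 3 * α * s := Real.sq_sqrt (by linarith)
  have hr1 : r < 1 := by nlinarith [mul_pos hα hs₀]
  have key : shareWithWifi α s - s * (1 + (1 - r) / (3 * r)) = -((1 - r) ^ 2 / (9 * α * r)) := by
    have hs' : s = (1 - r ^ 2) / (3 * α) := by field_simp; linarith
    rw [shareWithWifi, ← hr, hs']
    field_simp
    ring
  rw [key, neg_lt_zero]
  exact div_pos (pow_pos (by linarith) 2) (by positivity)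

lemma hasDerivAt_mul_comp_sqrt_two_thirds {h : ℝ → ℝ} {h' N Q v : ℝ} (hN : 0 < N) (hQ : 0 < Q)
    (hv : 0 < v) (hh : HasDerivAt h h' (Real.sqrt ((v - 2 / 3 * v) * Q / N))) :
    HasDerivAt (fun p => N * p * h (Real.sqrt ((v - p) * Q / N)))
      (N * (h (Real.sqrt ((v - 2 / 3 * v) * Q / N))
        - Real.sqrt ((v - 2 / 3 * v) * Q / N) * h')) (2 / 3 * v) := by
  set s₀ := Real.sqrt ((v - 2 / 3 * v) * Q / N) with hs₀
  have hx₀ : 0 < (v - 2 / 3 * v) * Q / N := by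
    apply div_pos (mul_pos _ hQ) hN
    linarith
  have hs₀pos : 0 < s₀ := Real.sqrt_pos.mpr hx₀
  have hs₀sq : s₀ ^ 2 = (v - 2 / 3 * v) * Q / N := Real.sq_sqrt hx₀.le
  have hs : HasDerivAt (fun p => Real.sqrt ((v - p) * Q / N)) (-(Q / N) / (2 * s₀)) (2 / 3 * v) :=
    (((hasDerivAt_id _).const_sub v).mul_const Q |>.div_const N
      |>.congr_deriv (by ring)).sqrt hx₀.ne'
  have h := ((hasDerivAt_id (2 / 3 * v)).const_mul N).mul (hh.comp (2 / 3 * v) hs)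
  refine h.congr_deriv ?_
  simp only [id, mul_one, Function.comp_apply]
  rw [← hs₀]
  have hvQ : v * Q = 3 * N * s₀ ^ 2 := by rw [hs₀sq]; field_simp; ring
  field_simp
  linear_combination -h' * hvQ

theorem stmt_16_general (N Q ubar V₁ α : ℝ) (l : ℝ → ℝ)
    (hN : 0 < N) (hQ : 0 < Q) (hV : ubar < V₁)
    (hα₀ : 0 < α) (hαsmall : α < 1 - Real.sqrt ((V₁ - ubar) * Q / N))
    (hl : ∀ p, l p = N * p * (Real.sqrt ((V₁ - ubar - p) * Q / N)
      + (1 - Real.sqrt (1 - 3 * α * Real.sqrt ((V₁ - ubar - p) * Q / N))) ^ 2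
        / (9 * α))) :
    (∀ p ∈ Set.Icc (0 : ℝ) (V₁ - ubar),
      0 ≤ (V₁ - ubar - p) * Q / N ∧
      0 ≤ 1 - 3 * α * Real.sqrt ((V₁ - ubar - p) * Q / N)) ∧
    ∃ p' : ℝ, 0 ≤ p' ∧ p' < (2 / 3) * (V₁ - ubar) ∧
      l ((2 / 3) * (V₁ - ubar)) < l p' := by
  set v := V₁ - ubar
  have hv : 0 < v := sub_pos.mpr hV
  have hbound : ∀ p ∈ Icc 0 v, 3 * α * Real.sqrt ((v - p) * Q / N) ≤ 3 / 4 := fun p hp =>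
    three_mul_mul_le_of_le_one_sub (Real.sqrt_nonneg _) <| by
      have : Real.sqrt ((v - p) * Q / N) ≤ Real.sqrt (v * Q / N) := by
        gcongr; linarith [hp.1]
      linarith
  refine ⟨fun p hp => ⟨div_nonneg (mul_nonneg (sub_nonneg.mpr hp.2) hQ.le) hN.le, by linarith [hbound p hp]⟩, ?_⟩
  have hp₀ : 2 / 3 * v ∈ Icc 0 v := ⟨by positivity, by linarith⟩
  have hs₀ : 0 < Real.sqrt ((v - 2 / 3 * v) * Q / N) :=
    Real.sqrt_pos.mpr (div_pos (mul_pos (by linarith) hQ) hN)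
  have hlt : 3 * α * Real.sqrt ((v - 2 / 3 * v) * Q / N) < 1 := by linarith [hbound _ hp₀]
  have hderiv := hasDerivAt_mul_comp_sqrt_two_thirds hN hQ hv (hasDerivAt_shareWithWifi hlt)
  rw [show (fun p => N * p * shareWithWifi α (Real.sqrt ((v - p) * Q / N))) = l from
    funext fun p => (hl p).symm] at hderiv
  obtain ⟨p', hp', hlp'⟩ := hderiv.exists_mem_Ioo_lt_of_neg
    (mul_neg_of_pos_of_neg hN (shareWithWifi_sub_mul_deriv_neg hα₀ hs₀ hlt)) (by positivity)
  exact ⟨p', hp'.1.le, hp'.2, hlp'⟩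

/-- Key step in the proof of Proposition 9 (Appendix F): with small 5G capacity
`Q < N/(V₁ − ū)` and small per-AP WiFi coverage `α < 1 − √((V₁ − ū)Q/N)`, the
profit lower bound `l(p)` is well defined (all square-root arguments are
nonnegative on `[0, V₁ − ū]`) and there is a price `p′ < (2/3)(V₁ − ū)` with
`l(p′) > l((2/3)(V₁ − ū))`. -/
theorem stmt_16 (N Q ubar V₁ α : ℝ) (l : ℝ → ℝ)
    (hN : 0 < N) (hQ : 0 < Q) (hubar : 0 ≤ ubar) (hV : ubar < V₁)
    (hQsmall : Q < N / (V₁ - ubar))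
    (hα₀ : 0 < α) (hαsmall : α < 1 - Real.sqrt ((V₁ - ubar) * Q / N))
    (hl : ∀ p, l p = N * p * (Real.sqrt ((V₁ - ubar - p) * Q / N)
      + (1 - Real.sqrt (1 - 3 * α * Real.sqrt ((V₁ - ubar - p) * Q / N))) ^ 2
        / (9 * α))) :
    (∀ p ∈ Set.Icc (0 : ℝ) (V₁ - ubar),
      0 ≤ (V₁ - ubar - p) * Q / N ∧
      0 ≤ 1 - 3 * α * Real.sqrt ((V₁ - ubar - p) * Q / N)) ∧
    ∃ p' : ℝ, 0 ≤ p' ∧ p' < (2 / 3) * (V₁ - ubar) ∧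
      l ((2 / 3) * (V₁ - ubar)) < l p' :=
  stmt_16_general N Q ubar V₁ α l hN hQ hV hα₀ hαsmall hl
end

section
/- Let N > 0, Q > 0, α ∈ (0,1), x₁, x₂ ∈ [0,1] with x₁ + x₂ ≤ 1, p₁ ∈ ℝ, p₂ > 0, β ≥ N/Q, and V ∈ ℝ. Define u₁(θ) = V − (N/Q)(x₁ + x₂(1 − αx₂))θ − p₁ and ũ₂(θ) = V − (1 − αx₂)(N/Q)(x₁ + x₂(1 − αx₂))θ − αx₂βθ − p₁ − p₂. Then ũ₂(θ) < u₁(θ) for every θ ∈ [0,1]. -/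
/-- Lemma 4 of the paper (extreme WiFi congestion): if the WiFi congestion
factor satisfies `β ≥ N/Q`, then every user strictly prefers 5G only, i.e.
`ũ₂(θ) < u₁(θ)` for all `θ ∈ [0,1]`. -/
theorem stmt_17 (N Q α x₁ x₂ p₁ p₂ β V : ℝ) (u₁ u₂ : ℝ → ℝ)
    (hN : 0 < N) (hQ : 0 < Q) (hα : α ∈ Set.Ioo (0 : ℝ) 1)
    (hx₁ : x₁ ∈ Set.Icc (0 : ℝ) 1) (hx₂ : x₂ ∈ Set.Icc (0 : ℝ) 1)
    (hsum : x₁ + x₂ ≤ 1)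
    (hp₂ : 0 < p₂) (hβ : N / Q ≤ β)
    (hu₁ : ∀ θ, u₁ θ = V - (N / Q) * (x₁ + x₂ * (1 - α * x₂)) * θ - p₁)
    (hu₂ : ∀ θ, u₂ θ = V - (1 - α * x₂) * (N / Q) * (x₁ + x₂ * (1 - α * x₂)) * θ
      - α * x₂ * β * θ - p₁ - p₂) :
    ∀ θ ∈ Set.Icc (0 : ℝ) 1, u₂ θ < u₁ θ := by
  intro θ hθ
  obtain ⟨hθ0, hθ1⟩ := hθ
  obtain ⟨hα0, hα1⟩ := hα
  obtain ⟨hx10, hx11⟩ := hx₁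
  obtain ⟨hx20, hx21⟩ := hx₂
  rw [hu₁, hu₂]
  have hNQ : 0 < N / Q := div_pos hN hQ
  have hax : α * x₂ ≤ 1 := by nlinarith
  have hS0 : 0 ≤ x₁ + x₂ * (1 - α * x₂) :=
    add_nonneg hx10 (mul_nonneg hx20 (by linarith))
  have hS1 : x₁ + x₂ * (1 - α * x₂) ≤ 1 := by nlinarith [mul_nonneg hx20 (mul_nonneg hα0.le hx20)]
  have h1 : (N / Q) * (x₁ + x₂ * (1 - α * x₂)) ≤ β := by
    calc (N / Q) * (x₁ + x₂ * (1 - α * x₂)) ≤ (N / Q) * 1 := by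
          exact mul_le_mul_of_nonneg_left hS1 hNQ.le
      _ = N / Q := by ring
      _ ≤ β := hβ
  have hmul : 0 ≤ α * x₂ * θ := by positivity
  nlinarith [mul_le_mul_of_nonneg_left h1 hmul]
end
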